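/- A feasible flow x is optimal if and only if there exists a potential function π such that for every arc (i,j) of the original network: if c_{ij}^π > 0 then x_{ij} = 0; if 0 < x_{ij} < u_{ij} then c_{ij}^π = 0; and if c_{ij}^π < 0 then x_{ij} = u_{ij}. -/

import Mathlib

/-!
If `π` satisfies complementary slackness and `y` is any feasible flow, then `y - x` is a
circulation, on which the potential terms of the reduced costs telescope; hence
`cost y - cost x = ∑ₐ c^π_a (y_a - x_a)`, and complementary slackness makes every term
nonnegative.

Conversely, if `x` is optimal, no closed trail of residual arcs has negative cost, since pushing
one unit around it would give a cheaper feasible flow. Then the cost of a cheapest residual trail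
ending at each vertex is a potential under which every residual arc has nonnegative reduced cost,
and for a pseudoflow this is exactly complementary slackness.
-/

open Finset

variable {V A : Type}

/-- Excess of node `i` with respect to pseudoflow `x` and supplies `b`. -/
def excess [Fintype A] [DecidableEq V] (src tgt : A → V) (b : V → ℤ)
    (x : A → ℤ) (i : V) : ℤ :=
  b i + ∑ a ∈ Finset.univ.filter (fun a => tgt a = i), x a
      - ∑ a ∈ Finset.univ.filter (fun a => src a = i), x a

/-- A pseudoflow obeys the nonnegativity and capacity constraints. -/
def IsPseudoflow (cap x : A → ℤ) : Prop := ∀ a, 0 ≤ x a ∧ x a ≤ cap a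

/-- A feasible flow: pseudoflow satisfying the conservation constraints. -/
def IsFeasible [Fintype A] [DecidableEq V] (src tgt : A → V) (b : V → ℤ)
    (cap x : A → ℤ) : Prop :=
  IsPseudoflow cap x ∧ ∀ i, excess src tgt b x i = 0

/-- Total cost of a flow. -/
def flowCost [Fintype A] (c x : A → ℤ) : ℤ := ∑ a, c a * x a

/-- An optimal solution of the minimum-cost flow problem. -/
def IsOptimal [Fintype A] [DecidableEq V] (src tgt : A → V) (b : V → ℤ)
    (cap c x : A → ℤ) : Prop :=
  IsFeasible src tgt b cap x ∧
    ∀ y, IsFeasible src tgt b cap y → flowCost c x ≤ flowCost c y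

/-- Source of a residual arc: `(a, true)` is the forward copy of `a`,
`(a, false)` the backward copy. -/
def rsrc (src tgt : A → V) (p : A × Bool) : V := if p.2 then src p.1 else tgt p.1

/-- Target of a residual arc. -/
def rtgt (src tgt : A → V) (p : A × Bool) : V := if p.2 then tgt p.1 else src p.1

/-- Cost of a residual arc. -/
def rcost (c : A → ℤ) (p : A × Bool) : ℤ := if p.2 then c p.1 else -c p.1

/-- Whether a (forward/backward) arc is present in the residual network of `x`. -/
def IsResidual (cap x : A → ℤ) (p : A × Bool) : Prop :=
  if p.2 then x p.1 < cap p.1 else 0 < x p.1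

/-- Reduced cost of a residual arc with respect to potentials `π`. -/
def redcost (src tgt : A → V) (c : A → ℤ) (π : V → ℝ) (p : A × Bool) : ℝ :=
  (rcost c p : ℝ) + π (rsrc src tgt p) - π (rtgt src tgt p)

/-- A directed cycle (closed directed walk), given by `k > 0` arcs in cyclic order. -/
def IsCycle {E : Type} (s t : E → V) {k : ℕ} (hk : 0 < k) (cyc : Fin k → E) : Prop :=
  ∀ i : Fin k, t (cyc i) = s (cyc ⟨(i.1 + 1) % k, Nat.mod_lt _ hk⟩)

/-- Underlying undirected (simple) graph of the arcs in `T`. -/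
def underlying (src tgt : A → V) (T : Finset A) : SimpleGraph V where
  Adj i j := i ≠ j ∧ ∃ a ∈ T, (src a = i ∧ tgt a = j) ∨ (src a = j ∧ tgt a = i)
  symm := by
    constructor
    rintro i j ⟨hij, a, haT, h⟩
    exact ⟨hij.symm, a, haT, h.symm⟩
  loopless := by constructor; rintro i ⟨h, -⟩; exact h rfl

/-- Total excess of the excess nodes. -/
def totalExcess [Fintype V] [Fintype A] [DecidableEq V]
    (src tgt : A → V) (b : V → ℤ) (x : A → ℤ) : ℤ :=
  ∑ i ∈ Finset.univ.filter (fun i => 0 < excess src tgt b x i), excess src tgt b x i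

section Walk

variable {E : Type} (s t : E → V)

inductive IsWalk : V → List E → V → Prop
  | nil (u : V) : IsWalk u [] u
  | cons {e : E} {l : List E} {v : V} : IsWalk (t e) l v → IsWalk (s e) (e :: l) v

variable {s t}

theorem IsWalk.single (e : E) : IsWalk s t (s e) [e] (t e) := .cons (.nil _)

theorem IsWalk.append {u v w : V} {l l' : List E} (h : IsWalk s t u l v)
    (h' : IsWalk s t v l' w) : IsWalk s t u (l ++ l') w := by
  induction h with
  | nil => exact h'
  | cons _ ih => exact .cons (ih h')

theorem IsWalk.of_append {u w : V} {l l' : List E} (h : IsWalk s t u (l ++ l') w) :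
    ∃ v, IsWalk s t u l v ∧ IsWalk s t v l' w := by
  induction l generalizing u with
  | nil => exact ⟨u, .nil u, h⟩
  | cons e l ih =>
    cases h with
    | cons h =>
      obtain ⟨v, h₁, h₂⟩ := ih h
      exact ⟨v, .cons h₁, h₂⟩

theorem IsWalk.map {E' : Type} (f : E' → E) {u v : V} {l : List E'}
    (h : IsWalk (fun e => s (f e)) (fun e => t (f e)) u l v) : IsWalk s t u (l.map f) v := by
  induction h with
  | nil u => exact .nil u
  | cons _ ih => exact .cons ih

theorem exists_trail_cost_min [Finite E] (w : E → ℤ) (j : V) :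
    ∃ u l, IsWalk s t u l j ∧ l.Nodup ∧
      ∀ u' l', IsWalk s t u' l' j → l'.Nodup → (l.map w).sum ≤ (l'.map w).sum := by
  have hfin : {l : List E | l.Nodup ∧ ∃ u, IsWalk s t u l j}.Finite := by
    have : Fintype E := Fintype.ofFinite E
    exact (Set.finite_coe_iff.1 (inferInstanceAs (Finite {l : List E // l.Nodup}))).subset
      fun l hl => hl.1
  obtain ⟨l, ⟨hnd, u, hl⟩, hmin⟩ :=
    Set.exists_min_image _ (fun l => (l.map w).sum) hfin ⟨[], List.nodup_nil, j, .nil j⟩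
  exact ⟨u, l, hl, hnd, fun u' l' hl' hnd' => hmin l' ⟨hnd', u', hl'⟩⟩

/-- The potential of a vertex is the cost of a cheapest trail into it: a cheapest trail into `s e`
either avoids `e` and extends by it, or passes through `e` and splits into a trail into `t e`
and a closed trail through `e`. -/
theorem exists_potential_of_closed_trail_cost_nonneg [Finite E] (w : E → ℤ)
    (h : ∀ u l, IsWalk s t u l u → l.Nodup → 0 ≤ (l.map w).sum) :
    ∃ d : V → ℤ, ∀ e, d (t e) ≤ d (s e) + w e := by
  choose u P hP hPnd hPmin using exists_trail_cost_min (s := s) (t := t) w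
  refine ⟨fun j => ((P j).map w).sum, fun e => ?_⟩
  show ((P (t e)).map w).sum ≤ ((P (s e)).map w).sum + w e
  by_cases he : e ∈ P (s e)
  · obtain ⟨P₁, P₂, hsplit⟩ := List.append_of_mem he
    have hwalk := hP (s e)
    have hnd := hPnd (s e)
    rw [hsplit] at hwalk hnd ⊢
    obtain ⟨v, h₁, h₂⟩ := hwalk.of_append
    have hcycle : 0 ≤ ((e :: P₂).map w).sum := by
      cases h₂ with
      | cons h₂' => exact h _ _ (.cons h₂') hnd.of_append_right
    have htrail := hPmin (t e) _ (P₁ ++ [e])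
      (h₁.append (by cases h₂ with | cons h₂' => exact .single e))
      (hnd.sublist ((List.cons_sublist_cons.2 (List.nil_sublist P₂)).append_left P₁))
    simp only [List.map_append, List.map_cons, List.map_nil, List.sum_append, List.sum_cons,
      List.sum_nil] at htrail hcycle ⊢
    linarith
  · have := hPmin (t e) _ (P (s e) ++ [e]) ((hP (s e)).append (.single e))
      (by rw [← List.concat_eq_append]; exact (List.nodup_concat _ _).2 ⟨he, hPnd _⟩)
    simpa using this

end Walk

section Flow

variable [Fintype A] [DecidableEq V] (src tgt : A → V)

theorem excess_add (b : V → ℤ) (x z : A → ℤ) (i : V) :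
    excess src tgt b (x + z) i = excess src tgt b x i + excess src tgt 0 z i := by
  simp only [excess, Pi.add_apply, Finset.sum_add_distrib, Pi.zero_apply]
  ring

theorem flowCost_add (c x z : A → ℤ) : flowCost c (x + z) = flowCost c x + flowCost c z := by
  simp only [flowCost, Pi.add_apply, mul_add, Finset.sum_add_distrib]

theorem sum_mul_sum_fiberwise [Fintype V] {M : Type} [CommSemiring M] (g : A → V) (f : V → M)
    (w : A → M) :
    ∑ i, f i * ∑ a ∈ univ.filter (fun a => g a = i), w a = ∑ a, f (g a) * w a := by
  rw [← Finset.sum_fiberwise univ g (fun a => f (g a) * w a)]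
  refine Finset.sum_congr rfl fun i _ => ?_
  rw [Finset.mul_sum]
  exact Finset.sum_congr rfl fun a ha => by rw [(Finset.mem_filter.1 ha).2]

theorem sum_potential_mul_excess [Fintype V] (π : V → ℝ) (z : A → ℤ) :
    ∑ i, π i * excess src tgt 0 z i = ∑ a, (π (tgt a) - π (src a)) * z a := by
  simp only [excess, Pi.zero_apply, zero_add, Int.cast_sub, Int.cast_sum, mul_sub,
    Finset.sum_sub_distrib, sum_mul_sum_fiberwise, sub_mul]

theorem flowCost_eq_sum_reducedCost_mul [Fintype V] (c z : A → ℤ)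
    (hz : ∀ i, excess src tgt 0 z i = 0) (π : V → ℝ) :
    (flowCost c z : ℝ) = ∑ a, ((c a : ℝ) + π (src a) - π (tgt a)) * z a := by
  have hπ := sum_potential_mul_excess src tgt π z
  simp only [hz, Int.cast_zero, mul_zero, Finset.sum_const_zero] at hπ
  calc (flowCost c z : ℝ)
      = ∑ a, (c a : ℝ) * z a - ∑ a, (π (tgt a) - π (src a)) * z a := by
        rw [← hπ, sub_zero, flowCost]
        push_cast
        rfl
    _ = ∑ a, ((c a : ℝ) + π (src a) - π (tgt a)) * z a := by
        rw [← Finset.sum_sub_distrib]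
        exact Finset.sum_congr rfl fun a _ => by ring

end Flow

section Optimality

variable (src tgt : A → V)

def ComplementarySlackness (cap c x : A → ℤ) (π : V → ℝ) : Prop :=
  ∀ a : A,
    (0 < (c a : ℝ) + π (src a) - π (tgt a) → x a = 0) ∧
    (0 < x a → x a < cap a → (c a : ℝ) + π (src a) - π (tgt a) = 0) ∧
    ((c a : ℝ) + π (src a) - π (tgt a) < 0 → x a = cap a)

theorem mul_sub_nonneg_of_slackness {r : ℝ} {x y u : ℤ} (hpos : 0 < r → x = 0)
    (hneg : r < 0 → x = u) (hy : 0 ≤ y ∧ y ≤ u) : 0 ≤ r * ((y : ℝ) - x) := by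
  rcases lt_trichotomy r 0 with hr | rfl | hr
  · rw [hneg hr]
    exact mul_nonneg_of_nonpos_of_nonpos hr.le (by exact_mod_cast sub_nonpos.2 hy.2)
  · simp
  · rw [hpos hr]
    exact mul_nonneg hr.le (by exact_mod_cast sub_nonneg.2 hy.1)

theorem isOptimal_of_complementarySlackness [Fintype V] [Fintype A] [DecidableEq V] {b : V → ℤ}
    {cap c x : A → ℤ} {π : V → ℝ} (hx : IsFeasible src tgt b cap x)
    (hπ : ComplementarySlackness src tgt cap c x π) : IsOptimal src tgt b cap c x := by
  refine ⟨hx, fun y hy => ?_⟩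
  have hcirc : ∀ i, excess src tgt 0 (y - x) i = 0 := fun i => by
    have := excess_add src tgt b x (y - x) i
    rw [add_sub_cancel, hx.2 i, hy.2 i] at this
    linarith
  have hcost : (0 : ℝ) ≤ flowCost c (y - x) := by
    rw [flowCost_eq_sum_reducedCost_mul src tgt c _ hcirc π]
    refine Finset.sum_nonneg fun a _ => ?_
    push_cast [Pi.sub_apply]
    exact mul_sub_nonneg_of_slackness (hπ a).1 (hπ a).2.2 (hy.1 a)
  have hsplit := flowCost_add c x (y - x)
  rw [add_sub_cancel] at hsplit
  have : 0 ≤ flowCost c (y - x) := by exact_mod_cast hcost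
  linarith

theorem complementarySlackness_of_redcost_nonneg {cap c x : A → ℤ} {π : V → ℝ}
    (hx : IsPseudoflow cap x) (h : ∀ q, IsResidual cap x q → 0 ≤ redcost src tgt c π q) :
    ComplementarySlackness src tgt cap c x π := by
  intro a
  have hfwd : x a < cap a → 0 ≤ (c a : ℝ) + π (src a) - π (tgt a) := h (a, true)
  have hbwd : 0 < x a → 0 ≤ -(c a : ℝ) + π (tgt a) - π (src a) := fun hpos => by
    simpa [redcost, rcost, rsrc, rtgt] using h (a, false) hpos
  refine ⟨fun hpos => ?_, fun hpos hlt => ?_, fun hneg => ?_⟩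
  · by_contra hne
    linarith [hbwd (lt_of_le_of_ne (hx a).1 (Ne.symm hne))]
  · linarith [hfwd hlt, hbwd hpos]
  · by_contra hne
    linarith [hfwd (lt_of_le_of_ne (hx a).2 hne)]

end Optimality

section Augmentation

variable [DecidableEq A]

def arcFlow (q : A × Bool) : A → ℤ := Pi.single q.1 (if q.2 then 1 else -1)

def pathFlow (L : List (A × Bool)) (a : A) : ℤ := L.count (a, true) - L.count (a, false)

theorem pathFlow_nil : pathFlow ([] : List (A × Bool)) = 0 := by
  funext a
  simp [pathFlow]

theorem pathFlow_cons (q : A × Bool) (L : List (A × Bool)) :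
    pathFlow (q :: L) = arcFlow q + pathFlow L := by
  funext a
  obtain ⟨a', _ | _⟩ := q <;> rcases eq_or_ne a' a with rfl | h <;>
    simp [pathFlow, arcFlow, *] <;> ring

theorem flowCost_arcFlow [Fintype A] (c : A → ℤ) (q : A × Bool) :
    flowCost c (arcFlow q) = rcost c q := by
  obtain ⟨a, _ | _⟩ := q <;> simp [flowCost, arcFlow, rcost, Pi.single_apply]

theorem flowCost_pathFlow [Fintype A] (c : A → ℤ) (L : List (A × Bool)) :
    flowCost c (pathFlow L) = (L.map (rcost c)).sum := by
  induction L with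
  | nil => simp [pathFlow_nil, flowCost]
  | cons q L ih =>
    rw [pathFlow_cons, flowCost_add, flowCost_arcFlow, ih, List.map_cons, List.sum_cons]

theorem excess_arcFlow [Fintype A] [DecidableEq V] (src tgt : A → V) (q : A × Bool) (i : V) :
    excess src tgt 0 (arcFlow q) i =
      (if rtgt src tgt q = i then 1 else 0) - (if rsrc src tgt q = i then 1 else 0) := by
  obtain ⟨a, _ | _⟩ := q
  · simp [excess, arcFlow, rsrc, rtgt, Finset.sum_pi_single']
    split_ifs <;> norm_num
  · simp [excess, arcFlow, rsrc, rtgt, Finset.sum_pi_single']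

theorem excess_pathFlow [Fintype A] [DecidableEq V] (src tgt : A → V) {u v : V}
    {L : List (A × Bool)} (h : IsWalk (rsrc src tgt) (rtgt src tgt) u L v) (i : V) :
    excess src tgt 0 (pathFlow L) i = (if v = i then 1 else 0) - (if u = i then 1 else 0) := by
  induction h with
  | nil => simp [pathFlow_nil, excess]
  | cons _ ih =>
    rw [pathFlow_cons, excess_add, excess_arcFlow, ih]
    ring

theorem isPseudoflow_add_pathFlow {cap x : A → ℤ} {L : List (A × Bool)}
    (hx : IsPseudoflow cap x) (hnd : L.Nodup) (hres : ∀ q ∈ L, IsResidual cap x q) :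
    IsPseudoflow cap (x + pathFlow L) := by
  intro a
  have hfwd : (a, true) ∈ L → x a < cap a := hres _
  have hbwd : (a, false) ∈ L → 0 < x a := hres _
  have := hx a
  simp only [Pi.add_apply, pathFlow, hnd.count]
  split_ifs with h₁ h₂ h₂ <;> simp only [h₁, h₂, true_implies] at hfwd hbwd <;> omega

end Augmentation

section Necessity

variable [Fintype A] [DecidableEq V] {src tgt : A → V} {b : V → ℤ} {cap c x : A → ℤ}

theorem IsOptimal.closed_trail_rcost_nonneg (hopt : IsOptimal src tgt b cap c x) {u : V}
    {L : List (A × Bool)} (hL : IsWalk (rsrc src tgt) (rtgt src tgt) u L u) (hnd : L.Nodup)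
    (hres : ∀ q ∈ L, IsResidual cap x q) : 0 ≤ (L.map (rcost c)).sum := by
  classical
  have hfeas : IsFeasible src tgt b cap (x + pathFlow L) :=
    ⟨isPseudoflow_add_pathFlow hopt.1.1 hnd hres, fun i => by
      rw [excess_add, hopt.1.2 i, excess_pathFlow src tgt hL, sub_self, add_zero]⟩
  have hcost := hopt.2 _ hfeas
  rw [flowCost_add, flowCost_pathFlow] at hcost
  linarith

theorem IsOptimal.exists_complementarySlackness (hopt : IsOptimal src tgt b cap c x) :
    ∃ π, ComplementarySlackness src tgt cap c x π := by
  obtain ⟨d, hd⟩ := exists_potential_of_closed_trail_cost_nonneg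
    (s := fun q : {q // IsResidual cap x q} => rsrc src tgt q.1)
    (t := fun q => rtgt src tgt q.1) (fun q => rcost c q.1) fun u l hl hnd => by
      simpa [Function.comp_def] using hopt.closed_trail_rcost_nonneg (hl.map Subtype.val)
        (hnd.map Subtype.val_injective) (fun q hq => by
          obtain ⟨q', -, rfl⟩ := List.mem_map.1 hq
          exact q'.2)
  refine ⟨fun i => d i,
    complementarySlackness_of_redcost_nonneg src tgt hopt.1.1 fun q hq => ?_⟩
  have : (d (rtgt src tgt q) : ℝ) ≤ d (rsrc src tgt q) + rcost c q := by
    exact_mod_cast hd ⟨q, hq⟩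
  simp only [redcost]
  linarith

end Necessity

/-- complementary slackness optimality conditions. -/
theorem complementary_slackness_optimality [Fintype V] [Fintype A] [DecidableEq V]
    (src tgt : A → V) (b : V → ℤ) (cap c x : A → ℤ)
    (hx : IsFeasible src tgt b cap x) :
    IsOptimal src tgt b cap c x ↔
      ∃ π : V → ℝ, ∀ a : A,
        (0 < (c a : ℝ) + π (src a) - π (tgt a) → x a = 0) ∧
        (0 < x a → x a < cap a → (c a : ℝ) + π (src a) - π (tgt a) = 0) ∧
        ((c a : ℝ) + π (src a) - π (tgt a) < 0 → x a = cap a) :=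
  ⟨IsOptimal.exists_complementarySlackness,
    fun ⟨_, hπ⟩ => isOptimal_of_complementarySlackness src tgt hx hπ⟩
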